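/- arXiv:1507.02749 — 4 statements merged into one kernel-verified Lean document; each statement's English description precedes it below -/
import Mathlib

section
/- If A ∈ SO(n) is a critical point of f_C(A) = Σᵢ cᵢ·Aᵢᵢ (with 0 ≤ c₁ < c₂ < ... < cₙ), then A is a diagonal matrix with each diagonal entry equal to ±1. -/
attribute [local instance] Matrix.normedAddCommGroup Matrix.normedSpace

/-- `A ∈ SO(n)` is a critical point of `f_C` if the derivative of `f_C` along every
differentiable curve in `SO(n)` through `A` vanishes (i.e. the differential of `f_C` at `A`
vanishes on the tangent space `T_A SO(n)`). -/
def IsCritPt (n : ℕ) (c : Fin n → ℝ) (A : Matrix (Fin n) (Fin n) ℝ) : Prop :=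
  ∀ γ : ℝ → Matrix (Fin n) (Fin n) ℝ,
    (∀ t, γ t ∈ Matrix.specialOrthogonalGroup (Fin n) ℝ) → γ 0 = A →
    DifferentiableAt ℝ γ 0 → deriv (fun t => ∑ i, c i * γ t i i) 0 = 0

/-!
For `i ≠ j` the rotations `R t` of the `(i, j)`-plane lie in `SO(n)`, so `t ↦ A * R t` and
`t ↦ R t * A` are curves in `SO(n)` through `A` with velocities `A * G` and `G * A`, where
`G = E_ij - E_ji`. Criticality of `A` along them gives `c_j A_ji - c_i A_ij = 0` and
`c_i A_ji - c_j A_ij = 0`, hence `(c_i² - c_j²) A_ij = 0`; the weights are distinct and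
nonnegative, so `A_ij = 0`. A diagonal orthogonal matrix has diagonal entries `±1`.
-/

open Matrix Real

section RotationPair

variable {m : Type*} [DecidableEq m]

noncomputable def cosSinPath (P Q : Matrix m m ℝ) (t : ℝ) : Matrix m m ℝ :=
  1 + (cos t - 1) • P + sin t • Q

@[simp]
lemma cosSinPath_zero (P Q : Matrix m m ℝ) : cosSinPath P Q 0 = 1 := by simp [cosSinPath]

variable [Fintype m]

-- `P` projects orthogonally onto a plane and `Q` is a quarter turn of it, so that
-- `cosSinPath P Q` is the one-parameter group of rotations of that plane.
structure IsRotationPair (P Q : Matrix m m ℝ) : Prop where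
  proj_mul_proj : P * P = P
  proj_mul_gen : P * Q = Q
  gen_mul_proj : Q * P = Q
  gen_mul_gen : Q * Q = -P
  transpose_proj : Pᵀ = P
  transpose_gen : Qᵀ = -Q

variable {P Q : Matrix m m ℝ}

lemma hasDerivAt_cosSinPath_zero : HasDerivAt (cosSinPath P Q) Q 0 := by
  have h := ((((hasDerivAt_cos 0).sub_const 1).smul_const P).const_add 1).add
    ((hasDerivAt_sin 0).smul_const Q)
  simp only [sin_zero, neg_zero, zero_smul, cos_zero, one_smul, zero_add] at h
  exact h

namespace IsRotationPair

lemma cosSinPath_add (hPQ : IsRotationPair P Q) (s t : ℝ) :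
    cosSinPath P Q (s + t) = cosSinPath P Q s * cosSinPath P Q t := by
  simp only [cosSinPath, add_mul, mul_add, smul_mul_assoc, mul_smul_comm, one_mul, mul_one,
    hPQ.proj_mul_proj, hPQ.proj_mul_gen, hPQ.gen_mul_proj, hPQ.gen_mul_gen,
    cos_add, sin_add, smul_neg]
  module

lemma transpose_cosSinPath (hPQ : IsRotationPair P Q) (t : ℝ) :
    (cosSinPath P Q t)ᵀ = cosSinPath P Q (-t) := by
  simp only [cosSinPath, transpose_add, transpose_smul, transpose_one, hPQ.transpose_proj,
    hPQ.transpose_gen, cos_neg, sin_neg, smul_neg, neg_smul]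

lemma cosSinPath_mem_specialOrthogonalGroup (hPQ : IsRotationPair P Q) (t : ℝ) :
    cosSinPath P Q t ∈ specialOrthogonalGroup m ℝ := by
  have horth : cosSinPath P Q t * (cosSinPath P Q t)ᵀ = 1 := by
    rw [hPQ.transpose_cosSinPath, ← hPQ.cosSinPath_add, add_neg_cancel, cosSinPath_zero]
  have hdet_sq : (cosSinPath P Q t).det * (cosSinPath P Q t).det = 1 := by
    simpa [det_transpose] using congrArg det horth
  -- The path is a group homomorphism, so its value at `t` is the square of its value at `t / 2`.
  have hdet_nonneg : 0 ≤ (cosSinPath P Q t).det := by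
    rw [← add_halves t, hPQ.cosSinPath_add, det_mul]
    exact mul_self_nonneg _
  refine ⟨(mem_orthogonalGroup_iff m ℝ).mpr horth, ?_⟩
  rcases mul_self_eq_one_iff.mp hdet_sq with h | h
  · exact h
  · linarith

end IsRotationPair

lemma isRotationPair_single {i j : m} (hij : i ≠ j) :
    IsRotationPair (single i i (1 : ℝ) + single j j 1) (single i j 1 - single j i 1) where
  proj_mul_proj := by simp [add_mul, mul_add, hij, hij.symm]
  proj_mul_gen := by simp [add_mul, mul_sub, hij, hij.symm]
  gen_mul_proj := by simp [sub_mul, mul_add, hij, hij.symm]; abel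
  gen_mul_gen := by simp [sub_mul, mul_sub, hij, hij.symm]; abel
  transpose_proj := by simp
  transpose_gen := by simp

end RotationPair

section Derivative

variable {m : Type*} [Fintype m] [DecidableEq m] {γ : ℝ → Matrix m m ℝ} {V : Matrix m m ℝ}
  {t : ℝ}

lemma HasDerivAt.matrix_const_mul (A : Matrix m m ℝ) (hγ : HasDerivAt γ V t) :
    HasDerivAt (fun s => A * γ s) (A * V) t :=
  (LinearMap.mulLeft ℝ A).toContinuousLinearMap.hasFDerivAt.comp_hasDerivAt t hγ

lemma HasDerivAt.matrix_mul_const (A : Matrix m m ℝ) (hγ : HasDerivAt γ V t) :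
    HasDerivAt (fun s => γ s * A) (V * A) t :=
  (LinearMap.mulRight ℝ A).toContinuousLinearMap.hasFDerivAt.comp_hasDerivAt t hγ

end Derivative

section WeightedTrace

variable {m : Type*} [Fintype m] [DecidableEq m] (c : m → ℝ) (A : Matrix m m ℝ) (i j : m)

lemma sum_mul_diag_eq_trace_diagonal_mul (M : Matrix m m ℝ) :
    ∑ k, c k * M k k = (diagonal c * M).trace := by
  simp [trace, diagonal_mul]

lemma sum_mul_diag_mul_single_sub_single :
    ∑ k, c k * (A * (single i j 1 - single j i 1) : Matrix m m ℝ) k k =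
      c j * A j i - c i * A i j := by
  simp [sum_mul_diag_eq_trace_diagonal_mul, mul_sub, ← mul_assoc, trace_mul_single, diagonal_mul]

lemma sum_mul_diag_single_sub_single_mul :
    ∑ k, c k * ((single i j 1 - single j i 1) * A : Matrix m m ℝ) k k =
      c i * A j i - c j * A i j := by
  simp [sum_mul_diag_eq_trace_diagonal_mul, sub_mul, mul_sub, trace_mul_comm (diagonal c),
    mul_assoc, trace_single_mul, mul_diagonal, mul_comm]

end WeightedTrace

lemma eq_zero_of_mul_sub_mul_eq_zero {a b x y : ℝ} (ha : 0 ≤ a) (hb : 0 ≤ b) (hab : a ≠ b)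
    (h₁ : b * y - a * x = 0) (h₂ : a * y - b * x = 0) : x = 0 := by
  have hsum : 0 < a + b := by
    rcases ha.lt_or_eq with ha | rfl
    · linarith
    · exact lt_of_le_of_ne (by linarith) (by simpa using hab)
  have hprod : (a - b) * (a + b) * x = 0 := by linear_combination b * h₂ - a * h₁
  simpa [sub_ne_zero.mpr hab, hsum.ne'] using hprod

lemma Matrix.IsDiag.apply_self_eq_one_or_neg_one {m R : Type*} [Fintype m] [DecidableEq m]
    [CommRing R] [NoZeroDivisors R] {A : Matrix m m R} (hdiag : A.IsDiag)
    (hA : A ∈ orthogonalGroup m R) (i : m) : A i i = 1 ∨ A i i = -1 := by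
  have hcol : ∑ k, A k i * A k i = 1 := by
    simpa [mul_apply] using congrFun (congrFun ((mem_orthogonalGroup_iff' m R).mp hA) i) i
  rw [Finset.sum_eq_single i (fun k _ hk => by rw [hdiag hk, zero_mul]) (by simp)] at hcol
  exact mul_self_eq_one_iff.mp hcol

namespace IsCritPt

variable {n : ℕ} {c : Fin n → ℝ} {A : Matrix (Fin n) (Fin n) ℝ}

lemma sum_mul_diag_eq_zero (hcrit : IsCritPt n c A) {γ : ℝ → Matrix (Fin n) (Fin n) ℝ}
    {V : Matrix (Fin n) (Fin n) ℝ} (hγ : ∀ t, γ t ∈ specialOrthogonalGroup (Fin n) ℝ)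
    (hγ₀ : γ 0 = A) (hV : HasDerivAt γ V 0) : ∑ i, c i * V i i = 0 := by
  have hf : HasDerivAt (fun t => ∑ i, c i * γ t i i) (∑ i, c i * V i i) 0 :=
    HasDerivAt.fun_sum fun i _ => (hasDerivAt_pi.1 (hasDerivAt_pi.1 hV i) i).const_mul (c i)
  rw [← hf.deriv]
  exact hcrit γ hγ hγ₀ hV.differentiableAt

lemma sum_mul_diag_mul_eq_zero (hcrit : IsCritPt n c A)
    (hA : A ∈ specialOrthogonalGroup (Fin n) ℝ) {P Q : Matrix (Fin n) (Fin n) ℝ}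
    (hPQ : IsRotationPair P Q) :
    ∑ k, c k * (A * Q) k k = 0 ∧ ∑ k, c k * (Q * A) k k = 0 :=
  ⟨hcrit.sum_mul_diag_eq_zero (fun t => mul_mem hA (hPQ.cosSinPath_mem_specialOrthogonalGroup t))
      (by simp) (hasDerivAt_cosSinPath_zero.matrix_const_mul A),
    hcrit.sum_mul_diag_eq_zero (fun t => mul_mem (hPQ.cosSinPath_mem_specialOrthogonalGroup t) hA)
      (by simp) (hasDerivAt_cosSinPath_zero.matrix_mul_const A)⟩

lemma apply_eq_zero_of_ne (hcrit : IsCritPt n c A) (hA : A ∈ specialOrthogonalGroup (Fin n) ℝ)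
    (hc : Function.Injective c) (hc0 : ∀ i, 0 ≤ c i) {i j : Fin n} (hij : i ≠ j) :
    A i j = 0 := by
  obtain ⟨hright, hleft⟩ := hcrit.sum_mul_diag_mul_eq_zero hA (isRotationPair_single hij)
  rw [sum_mul_diag_mul_single_sub_single] at hright
  rw [sum_mul_diag_single_sub_single_mul] at hleft
  exact eq_zero_of_mul_sub_mul_eq_zero (hc0 i) (hc0 j) (hc.ne hij) hright hleft

end IsCritPt

/-- If `A ∈ SO(n)` is a critical point of `f_C(A) = ∑ i, c i * A i i`
(with `0 ≤ c 0 < c 1 < ... < c (n-1)`), then `A` is diagonal with diagonal entries `±1`. -/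
theorem critPt_isDiag (n : ℕ) (c : Fin n → ℝ) (hc : StrictMono c) (hc0 : ∀ i, 0 ≤ c i)
    (A : Matrix (Fin n) (Fin n) ℝ) (hA : A ∈ Matrix.specialOrthogonalGroup (Fin n) ℝ)
    (hcrit : IsCritPt n c A) :
    A.IsDiag ∧ ∀ i, A i i = 1 ∨ A i i = -1 := by
  have hdiag : A.IsDiag := fun _ _ hij => hcrit.apply_eq_zero_of_ne hA hc.injective hc0 hij
  exact ⟨hdiag, hdiag.apply_self_eq_one_or_neg_one hA.1⟩
end

section
/- Every diagonal matrix A with diagonal entries ±1 and det A = 1 is a critical point of the function f_C(A) = Σᵢ cᵢ·Aᵢᵢ on SO(n), where 0 ≤ c₁ < c₂ < ... < cₙ. -/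
attribute [local instance] Matrix.normedAddCommGroup Matrix.normedSpace

/-!
Along a curve `γ` in `O(n)` every column keeps unit length, so differentiating
`∑ k, γ k i ^ 2 = 1` gives `∑ k, γ k i * γ' k i = 0`. At a diagonal point this sum reduces to
`γ i i * γ' i i`, and `γ i i = ±1` forces `γ' i i = 0`: every diagonal entry, hence `f_C`,
is stationary there.
-/

open Matrix

variable {ι : Type*} [Fintype ι]

theorem HasDerivAt.matrix_apply {γ : ℝ → Matrix ι ι ℝ} {γ' : Matrix ι ι ℝ} {t : ℝ}
    (hγ : HasDerivAt γ γ' t) (i j : ι) : HasDerivAt (fun s => γ s i j) (γ' i j) t :=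
  hasDerivAt_pi.1 (hasDerivAt_pi.1 hγ i) j

variable [DecidableEq ι]

theorem sum_mul_deriv_col_eq_zero {γ : ℝ → Matrix ι ι ℝ} {γ' : Matrix ι ι ℝ} {t : ℝ}
    (hγ : ∀ s, γ s ∈ orthogonalGroup ι ℝ) (hγ' : HasDerivAt γ γ' t) (i : ι) :
    ∑ k, γ t k i * γ' k i = 0 := by
  have hcol : (fun s => ∑ k, γ s k i * γ s k i) = fun _ => 1 := by
    funext s
    simpa [mul_apply, one_apply] using
      congrFun (congrFun ((mem_orthogonalGroup_iff' ι ℝ).1 (hγ s)) i) i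
  have hderiv : HasDerivAt (fun s => ∑ k, γ s k i * γ s k i)
      (∑ k, (γ' k i * γ t k i + γ t k i * γ' k i)) t :=
    HasDerivAt.fun_sum fun k _ => (hγ'.matrix_apply k i).mul (hγ'.matrix_apply k i)
  rw [hcol] at hderiv
  have h := (hasDerivAt_const t (1 : ℝ)).unique hderiv
  simp only [← two_mul, mul_comm (γ' _ i), ← Finset.mul_sum] at h
  linarith

theorem deriv_apply_self_eq_zero_of_isDiag {γ : ℝ → Matrix ι ι ℝ} {γ' : Matrix ι ι ℝ} {t : ℝ}
    (hγ : ∀ s, γ s ∈ orthogonalGroup ι ℝ) (hγ' : HasDerivAt γ γ' t) (hdiag : (γ t).IsDiag)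
    {i : ι} (hi : γ t i i ≠ 0) : γ' i i = 0 := by
  have h := sum_mul_deriv_col_eq_zero hγ hγ' i
  rw [Finset.sum_eq_single i (fun k _ hk => by rw [hdiag hk, zero_mul])
    (fun h => absurd (Finset.mem_univ i) h)] at h
  exact (mul_eq_zero.1 h).resolve_left hi

theorem diag_pm_one_isCritPt_general (n : ℕ) (c : Fin n → ℝ)
    (A : Matrix (Fin n) (Fin n) ℝ) (hdiag : A.IsDiag)
    (hpm : ∀ i, A i i = 1 ∨ A i i = -1) :
    IsCritPt n c A := by
  rintro γ hγ rfl hdiff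
  obtain ⟨γ', hγ'⟩ : ∃ γ' : Matrix (Fin n) (Fin n) ℝ, HasDerivAt γ γ' 0 := ⟨_, hdiff.hasDerivAt⟩
  have horth s : γ s ∈ orthogonalGroup (Fin n) ℝ := (mem_specialOrthogonalGroup_iff.1 (hγ s)).1
  have hA i : γ 0 i i ≠ 0 := by rcases hpm i with h | h <;> rw [h] <;> norm_num
  have hf : HasDerivAt (fun t => ∑ i, c i * γ t i i) (∑ i, c i * γ' i i) 0 :=
    HasDerivAt.fun_sum fun i _ => (hγ'.matrix_apply i i).const_mul (c i)
  rw [hf.deriv]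
  exact Finset.sum_eq_zero fun i _ => by
    rw [deriv_apply_self_eq_zero_of_isDiag horth hγ' hdiag (hA i), mul_zero]

/-- Every diagonal matrix `A` with diagonal entries `±1` and `det A = 1`
is a critical point of `f_C(A) = ∑ i, c i * A i i` on `SO(n)`,
where `0 ≤ c 0 < c 1 < ... < c (n-1)`. -/
theorem diag_pm_one_isCritPt (n : ℕ) (c : Fin n → ℝ) (hc : StrictMono c) (hc0 : ∀ i, 0 ≤ c i)
    (A : Matrix (Fin n) (Fin n) ℝ) (hdiag : A.IsDiag)
    (hpm : ∀ i, A i i = 1 ∨ A i i = -1) (hdet : A.det = 1) :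
    IsCritPt n c A :=
  diag_pm_one_isCritPt_general n c A hdiag hpm
end

section
/- Let A ∈ SO(n) be diagonal with entries εᵢ = ±1 and let 0 ≤ c₁ < c₂ < ... < cₙ. For indices α < β and γ < δ, the second derivative ∂²/∂θ∂φ f_C(A·B_{αβ}(θ)·B_{γδ}(φ)) at θ = φ = 0 equals −cα·εα − cβ·εβ if (α,β) = (γ,δ), and 0 otherwise, where f_C(X) = Σₖ cₖ·Xₖₖ. -/
/-!
Differentiating `θ ↦ B_{ij}(θ)` at `0` gives the skew generator `E_{ij} = e_{ji} - e_{ij}`, so by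
the product rule the mixed derivative is `f_C(A E_{αβ} E_{γδ}) = ∑ₖ cₖ εₖ (E_{αβ} E_{γδ})ₖₖ`.
Multiplying out the matrix units, this is `-(c_α ε_α + c_β ε_β)` when `(α, β) = (γ, δ)`; the only
other pairing with a nonzero diagonal, `(α, β) = (δ, γ)`, is excluded by `α < β` and `γ < δ`.
-/

attribute [local instance] Matrix.normedAddCommGroup Matrix.normedSpace

/-- The rotation matrix `B i j θ`: the identity except with `cos θ` at `(i,i)` and `(j,j)`,
`-sin θ` at `(i,j)` and `sin θ` at `(j,i)`. -/
noncomputable def rotB (n : ℕ) (i j : Fin n) (θ : ℝ) : Matrix (Fin n) (Fin n) ℝ :=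
  Matrix.of fun k l =>
    if k = i ∧ l = i then Real.cos θ
    else if k = j ∧ l = j then Real.cos θ
    else if k = i ∧ l = j then -Real.sin θ
    else if k = j ∧ l = i then Real.sin θ
    else if k = l then 1 else 0

open Matrix

variable {n : ℕ}

def rotGen (n : ℕ) (i j : Fin n) : Matrix (Fin n) (Fin n) ℝ := single j i 1 - single i j 1

theorem hasDerivAt_rotB_apply {i j : Fin n} (hij : i ≠ j) (k l : Fin n) :
    HasDerivAt (fun θ => rotB n i j θ k l) (rotGen n i j k l) 0 := by
  have hji := hij.symm
  unfold rotB rotGen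
  by_cases hki : k = i <;> by_cases hkj : k = j <;> by_cases hli : l = i <;>
    by_cases hlj : l = j <;> subst_vars <;> simp_all [hasDerivAt_const, eq_comm]
  all_goals first
    | simpa using Real.hasDerivAt_cos 0
    | simpa using Real.hasDerivAt_sin 0
    | simpa using (Real.hasDerivAt_sin 0).fun_neg

theorem hasDerivAt_sum_mul_diag_mul_rotB_mul (w : Fin n → ℝ) (M C : Matrix (Fin n) (Fin n) ℝ)
    {i j : Fin n} (hij : i ≠ j) :
    HasDerivAt (fun θ => ∑ k, w k * (M * rotB n i j θ * C) k k)
      (∑ k, w k * (M * rotGen n i j * C) k k) 0 := by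
  simp only [mul_apply]
  refine HasDerivAt.fun_sum fun k _ => HasDerivAt.const_mul _ <|
    HasDerivAt.fun_sum fun m _ => HasDerivAt.mul_const ?_ _
  exact HasDerivAt.fun_sum fun l _ => (hasDerivAt_rotB_apply hij l m).const_mul _

theorem sum_mul_diag_mul_of_isDiag (w : Fin n → ℝ) {A : Matrix (Fin n) (Fin n) ℝ}
    (hA : A.IsDiag) (X : Matrix (Fin n) (Fin n) ℝ) :
    ∑ k, w k * (A * X) k k = ∑ k, (w k * A k k) * X k k := by
  rw [← hA.diagonal_diag]
  simp only [diagonal_mul, diag_apply, diagonal_apply_eq, mul_assoc]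

theorem sum_mul_diag_single (w : Fin n → ℝ) (a d : Fin n) :
    ∑ k, w k * (single a d 1 : Matrix (Fin n) (Fin n) ℝ) k k = if a = d then w a else 0 := by
  rw [Finset.sum_eq_single a (fun k _ hk => by simp [Ne.symm hk]) (by simp)]
  simp [single_apply, eq_comm]

theorem sum_mul_diag_single_mul_single (w : Fin n → ℝ) (a b c d : Fin n) :
    ∑ k, w k * (single a b 1 * single c d 1 : Matrix (Fin n) (Fin n) ℝ) k k =
      if b = c ∧ a = d then w a else 0 := by
  by_cases hbc : b = c
  · subst hbc
    simp [sum_mul_diag_single]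
  · simp [hbc]

theorem sum_mul_diag_rotGen_mul_rotGen (w : Fin n → ℝ) (i j k l : Fin n) :
    ∑ m, w m * (rotGen n i j * rotGen n k l) m m =
      (if i = l ∧ j = k then w i + w j else 0) - (if i = k ∧ j = l then w i + w j else 0) := by
  simp only [rotGen, sub_mul, mul_sub, Matrix.sub_apply, Finset.sum_sub_distrib,
    sum_mul_diag_single_mul_single]
  grind

theorem second_deriv_fC_general (n : ℕ) (c : Fin n → ℝ)
    (A : Matrix (Fin n) (Fin n) ℝ)
    (hdiag : A.IsDiag)
    (α β γ δ : Fin n) (hαβ : α < β) (hγδ : γ < δ) :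
    deriv (fun φ => deriv
        (fun θ => ∑ k, c k * (A * rotB n α β θ * rotB n γ δ φ) k k) 0) 0 =
      if α = γ ∧ β = δ then -(c α * A α α) - c β * A β β else 0 := by
  have hθ (φ : ℝ) :=
    (hasDerivAt_sum_mul_diag_mul_rotB_mul c A (rotB n γ δ φ) hαβ.ne).deriv
  have hφ := hasDerivAt_sum_mul_diag_mul_rotB_mul c (A * rotGen n α β) 1 hγδ.ne
  simp only [Matrix.mul_one] at hφ
  have not_swapped : ¬(α = δ ∧ β = γ) := by
    rintro ⟨rfl, rfl⟩
    exact lt_asymm hαβ hγδ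
  simp only [hθ]
  rw [hφ.deriv, Matrix.mul_assoc, sum_mul_diag_mul_of_isDiag c hdiag,
    sum_mul_diag_rotGen_mul_rotGen, if_neg not_swapped]
  split_ifs <;> ring

/-- For a diagonal `A ∈ SO(n)` with diagonal entries `εᵢ = A i i = ±1` and
`0 ≤ c 0 < ... < c (n-1)`, for `α < β` and `γ < δ`, the second derivative
`∂²/∂θ∂φ f_C(A·B_{αβ}(θ)·B_{γδ}(φ))` at `θ = φ = 0` equals `-c α·ε α - c β·ε β` if
`(α,β) = (γ,δ)` and `0` otherwise, where `f_C(X) = ∑ k, c k * X k k`. -/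
theorem second_deriv_fC (n : ℕ) (c : Fin n → ℝ) (hc : StrictMono c) (hc0 : ∀ i, 0 ≤ c i)
    (A : Matrix (Fin n) (Fin n) ℝ) (hA : A ∈ Matrix.specialOrthogonalGroup (Fin n) ℝ)
    (hdiag : A.IsDiag) (hpm : ∀ i, A i i = 1 ∨ A i i = -1)
    (α β γ δ : Fin n) (hαβ : α < β) (hγδ : γ < δ) :
    deriv (fun φ => deriv
        (fun θ => ∑ k, c k * (A * rotB n α β θ * rotB n γ δ φ) k k) 0) 0 =
      if α = γ ∧ β = δ then -(c α * A α α) - c β * A β β else 0 :=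
  second_deriv_fC_general n c A hdiag α β γ δ hαβ hγδ
end

section
/- Let A ∈ SO(n) be diagonal with entries εᵢ = ±1, and let i₁ < i₂ < ... < i_m be the indices with εᵢ = +1. Then the Morse index of the critical point A of f_C (the number of negative eigenvalues of the Hessian, i.e., the number of pairs i < j with cᵢεᵢ + cⱼεⱼ > 0) equals (i₁ − 1) + (i₂ − 1) + ... + (i_m − 1). -/
open scoped Classical

/-- Let `A ∈ SO(n)` be diagonal with entries `εᵢ = ±1` and let
`0 ≤ c 0 < ... < c (n-1)`. The Morse index of the critical point `A` of `f_C`, i.e. the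
number of pairs `i < j` with `cᵢεᵢ + cⱼεⱼ > 0`, equals `(i₁ - 1) + ... + (i_m - 1)`, the sum
of `(i - 1)` over the (1-indexed) indices `i` with `εᵢ = +1`; with the 0-indexed `Fin n`
this sum is `∑ i with A i i = 1, (i : ℕ)`. -/
theorem morse_index_eq (n : ℕ) (c : Fin n → ℝ) (hc : StrictMono c) (hc0 : ∀ i, 0 ≤ c i)
    (A : Matrix (Fin n) (Fin n) ℝ) (hA : A ∈ Matrix.specialOrthogonalGroup (Fin n) ℝ)
    (hdiag : A.IsDiag) (hpm : ∀ i, A i i = 1 ∨ A i i = -1) :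
    (Finset.univ.filter fun p : Fin n × Fin n =>
        p.1 < p.2 ∧ 0 < c p.1 * A p.1 p.1 + c p.2 * A p.2 p.2).card =
      ∑ i ∈ Finset.univ.filter (fun i => A i i = 1), (i : ℕ) := by
  have key : ∀ p : Fin n × Fin n,
      (p.1 < p.2 ∧ 0 < c p.1 * A p.1 p.1 + c p.2 * A p.2 p.2) ↔
      (p.1 < p.2 ∧ A p.2 p.2 = 1) := by
    rintro ⟨i, j⟩
    dsimp only
    constructor
    · rintro ⟨hij, hpos⟩
      refine ⟨hij, ?_⟩
      rcases hpm j with h | h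
      · exact h
      · exfalso
        rw [h] at hpos
        have hcij : c i < c j := hc hij
        rcases hpm i with h' | h' <;> rw [h'] at hpos <;> nlinarith [hc0 i]
    · rintro ⟨hij, h⟩
      refine ⟨hij, ?_⟩
      rw [h]
      have hcij : c i < c j := hc hij
      rcases hpm i with h' | h' <;> rw [h'] <;> nlinarith [hc0 i]
  have hfeq : (Finset.univ.filter fun p : Fin n × Fin n =>
      p.1 < p.2 ∧ 0 < c p.1 * A p.1 p.1 + c p.2 * A p.2 p.2) =
      (Finset.univ.filter fun p : Fin n × Fin n => p.1 < p.2 ∧ A p.2 p.2 = 1) := by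
    apply Finset.filter_congr
    intro p _
    simpa using key p
  rw [hfeq]
  rw [Finset.card_filter]
  rw [← Finset.univ_product_univ, Finset.sum_product_right]
  have : ∀ j : Fin n, (∑ i : Fin n, if i < j ∧ A j j = 1 then 1 else 0) =
      if A j j = 1 then (j : ℕ) else 0 := by
    intro j
    by_cases h : A j j = 1
    · simp only [h, and_true, if_pos]
      rw [Finset.sum_boole]
      norm_cast
      rw [show (Finset.filter (fun x => x < j) Finset.univ) = Finset.Iio j from by ext x; simp]
      exact Fin.card_Iio j
    · simp [h]
  simp_rw [this]
  rw [← Finset.sum_filter]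
end
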